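/- arXiv:2403.16981 — 4 statements merged into one kernel-verified Lean document; each statement's English description precedes it below -/
import Mathlib

section
/- For all n ∈ ℕ, probability distributions p,q on a countable domain, α ∈ (0,1/2], and λ ∈ (0,1): Σ_{x ∈ X^n} min(α·p^⊗n(x), (1−α)·q^⊗n(x)) ≤ α^(1−λ) · (1−α)^λ · (1 − H_{1−λ}(p,q))^n. -/
private lemma min_le_rpow_mul (a b l : ℝ) (ha : 0 ≤ a) (hb : 0 ≤ b)
    (hl0 : 0 ≤ l) (hl1 : l ≤ 1) : min a b ≤ a ^ (1 - l) * b ^ l := by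
  set m := min a b with hm
  have hm0 : 0 ≤ m := le_min ha hb
  have h1 : m = m ^ (1 - l) * m ^ l := by
    rw [← Real.rpow_add' hm0 (by norm_num)]
    simp
  calc m = m ^ (1 - l) * m ^ l := h1
    _ ≤ a ^ (1 - l) * b ^ l := by
        apply mul_le_mul
        · exact Real.rpow_le_rpow hm0 (min_le_left a b) (by linarith)
        · exact Real.rpow_le_rpow hm0 (min_le_right a b) hl0
        · exact Real.rpow_nonneg hm0 l
        · exact Real.rpow_nonneg ha _

set_option maxHeartbeats 1000000 in
private lemma tsum_pi_prod (g : ℕ → ℝ) (hg : ∀ i, 0 ≤ g i) (hs : Summable g) (n : ℕ) :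
    Summable (fun x : Fin n → ℕ => ∏ i, g (x i)) ∧
      (∑' x : Fin n → ℕ, ∏ i, g (x i)) = (∑' i, g i) ^ n := by
  induction n with
  | zero =>
    have h : HasSum (fun x : Fin 0 → ℕ => ∏ i, g (x i)) 1 := by
      have := hasSum_single (f := fun x : Fin 0 → ℕ => ∏ i, g (x i))
        (fun _ => 0) (fun b hb => absurd (Subsingleton.elim b _) hb)
      simpa using this
    exact ⟨h.summable, by simpa using h.tsum_eq⟩
  | succ n ih =>
    obtain ⟨ihs, iht⟩ := ih
    set F : ℕ × (Fin n → ℕ) → ℝ := fun z => g z.1 * ∏ i, g (z.2 i) with hF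
    have hnorm1 : Summable fun i => ‖g i‖ :=
      hs.congr fun i => (Real.norm_of_nonneg (hg i)).symm
    have hnorm2 : Summable fun y : Fin n → ℕ => ‖∏ i, g (y i)‖ :=
      ihs.congr fun y =>
        (Real.norm_of_nonneg (Finset.prod_nonneg fun i _ => hg _)).symm
    have hFs : Summable F := summable_mul_of_summable_norm (f := g)
      (g := fun y : Fin n → ℕ => ∏ i, g (y i)) hnorm1 hnorm2
    have hFt : (∑' i, g i) * (∑' y : Fin n → ℕ, ∏ i, g (y i)) = ∑' z, F z :=
      tsum_mul_tsum_of_summable_norm (f := g)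
        (g := fun y : Fin n → ℕ => ∏ i, g (y i)) hnorm1 hnorm2
    have hcomp : ∀ x : Fin (n+1) → ℕ, (∏ i, g (x i)) = F ((Fin.consEquiv fun _ : Fin (n+1) => ℕ).symm x) := by
      intro x
      simp [hF, Fin.prod_univ_succ, Fin.consEquiv, Fin.tail]
    constructor
    · have : Summable (fun x : Fin (n+1) → ℕ => F ((Fin.consEquiv fun _ : Fin (n+1) => ℕ).symm x)) := hFs.comp_injective ((Fin.consEquiv fun _ : Fin (n+1) => ℕ).symm).injective
      exact this.congr fun x => (hcomp x).symm
    · calc (∑' x : Fin (n+1) → ℕ, ∏ i, g (x i))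
          = ∑' x : Fin (n+1) → ℕ, F ((Fin.consEquiv fun _ : Fin (n+1) => ℕ).symm x) := tsum_congr hcomp
        _ = ∑' z, F z := ((Fin.consEquiv fun _ : Fin (n+1) => ℕ).symm).tsum_eq F
        _ = (∑' i, g i) * (∑' y : Fin n → ℕ, ∏ i, g (y i)) := hFt.symm
        _ = (∑' i, g i) ^ (n + 1) := by rw [iht, pow_succ]; ring

/-- Bayes error bound: `P_e^{(n)} ≤ α^{1−λ} (1−α)^λ (1 − H_{1−λ}(p,q))^n`,
where `1 − H_{1−λ}(p,q) = Σ_i p_i^{1−λ} q_i^λ`. -/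
theorem stmt5 (p q : ℕ → ℝ) (hp : ∀ i, 0 ≤ p i) (hq : ∀ i, 0 ≤ q i)
    (hp1 : ∑' i, p i = 1) (hq1 : ∑' i, q i = 1)
    (α lam : ℝ) (hα : α ∈ Set.Ioc (0:ℝ) (1/2)) (hlam : lam ∈ Set.Ioo (0:ℝ) 1)
    (n : ℕ) :
    ∑' x : Fin n → ℕ, min (α * ∏ i, p (x i)) ((1 - α) * ∏ i, q (x i))
      ≤ α ^ (1 - lam) * (1 - α) ^ lam
          * (∑' i, (p i) ^ (1 - lam) * (q i) ^ lam) ^ n := by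
  obtain ⟨hα0, hα2⟩ := hα
  obtain ⟨hl0, hl1⟩ := hlam
  have hα1 : 0 ≤ 1 - α := by linarith
  set g : ℕ → ℝ := fun i => p i ^ (1 - lam) * q i ^ lam with hgdef
  have hg0 : ∀ i, 0 ≤ g i := fun i =>
    mul_nonneg (Real.rpow_nonneg (hp i) _) (Real.rpow_nonneg (hq i) _)
  -- summability of p and q
  have hps : Summable p := by
    by_contra h
    rw [tsum_eq_zero_of_not_summable h] at hp1; norm_num at hp1
  have hqs : Summable q := by
    by_contra h
    rw [tsum_eq_zero_of_not_summable h] at hq1; norm_num at hq1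
  -- summability of g via AM-GM
  have hgs : Summable g :=
    Summable.of_nonneg_of_le hg0
      (fun i => Real.geom_mean_le_arith_mean2_weighted (by linarith) hl0.le
        (hp i) (hq i) (by ring))
      ((hps.mul_left _).add (hqs.mul_left _))
  obtain ⟨hGs, hGt⟩ := tsum_pi_prod g hg0 hgs n
  set c : ℝ := α ^ (1 - lam) * (1 - α) ^ lam with hc
  -- pointwise bound
  have hpt : ∀ x : Fin n → ℕ,
      min (α * ∏ i, p (x i)) ((1 - α) * ∏ i, q (x i)) ≤ c * ∏ i, g (x i) := by
    intro x
    have hP : 0 ≤ ∏ i, p (x i) := Finset.prod_nonneg fun i _ => hp _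
    have hQ : 0 ≤ ∏ i, q (x i) := Finset.prod_nonneg fun i _ => hq _
    have h1 := min_le_rpow_mul (α * ∏ i, p (x i)) ((1 - α) * ∏ i, q (x i)) lam
      (mul_nonneg hα0.le hP) (mul_nonneg hα1 hQ) hl0.le hl1.le
    refine h1.trans_eq ?_
    rw [Real.mul_rpow hα0.le hP, Real.mul_rpow hα1 hQ]
    rw [← Real.finset_prod_rpow _ _ (fun i _ => hp _) _,
        ← Real.finset_prod_rpow _ _ (fun i _ => hq _) _]
    rw [hc]
    simp only [hgdef]
    rw [Finset.prod_mul_distrib]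
    ring
  have hnonneg : ∀ x : Fin n → ℕ,
      0 ≤ min (α * ∏ i, p (x i)) ((1 - α) * ∏ i, q (x i)) := fun x =>
    le_min (mul_nonneg hα0.le (Finset.prod_nonneg fun i _ => hp _))
      (mul_nonneg hα1 (Finset.prod_nonneg fun i _ => hq _))
  have hRs : Summable (fun x : Fin n → ℕ => c * ∏ i, g (x i)) := hGs.mul_left c
  have hLs : Summable (fun x : Fin n → ℕ =>
      min (α * ∏ i, p (x i)) ((1 - α) * ∏ i, q (x i))) :=
    Summable.of_nonneg_of_le hnonneg hpt hRs
  calc ∑' x : Fin n → ℕ, min (α * ∏ i, p (x i)) ((1 - α) * ∏ i, q (x i))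
      ≤ ∑' x : Fin n → ℕ, c * ∏ i, g (x i) := Summable.tsum_le_tsum hpt hLs hRs
    _ = c * (∑' i, g i) ^ n := by rw [tsum_mul_left, hGt]
end

section
/- For all x ≥ 0, α ∈ (0, 1/2], r ≥ 0, and λ ∈ [0, r/log(1/α)] with λ ∈ (0, 1/2], we have 1 + x/(1 + αx) ≤ e^(2r) · (1 + x)^(1−λ). -/
/-!
Put `b = 1/α ≥ 2`. The left-hand side is at most `min (1 + x) (1 + b) ≤ min (1 + x) (b ^ 2)`, and
the minimum of two nonnegative numbers is at most any weighted geometric mean of them, here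
`(b ^ 2) ^ λ * (1 + x) ^ (1 - λ)`. Finally `b ^ (2λ) = exp (2 λ log b) ≤ exp (2r)`.
-/

open Real

namespace Real

theorem rpow_mul_rpow_one_sub_self {a : ℝ} (ha : 0 ≤ a) (t : ℝ) : a ^ t * a ^ (1 - t) = a := by
  rw [← rpow_add' ha (by norm_num), add_sub_cancel, rpow_one]

theorem min_le_rpow_mul_rpow_one_sub {a b t : ℝ} (ha : 0 ≤ a) (hb : 0 ≤ b) (ht₀ : 0 ≤ t)
    (ht₁ : t ≤ 1) : min a b ≤ a ^ t * b ^ (1 - t) := by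
  rcases le_total a b with hab | hba
  · calc min a b = a ^ t * a ^ (1 - t) := by rw [min_eq_left hab, rpow_mul_rpow_one_sub_self ha]
      _ ≤ a ^ t * b ^ (1 - t) := by gcongr
  · calc min a b = b ^ t * b ^ (1 - t) := by rw [min_eq_right hba, rpow_mul_rpow_one_sub_self hb]
      _ ≤ a ^ t * b ^ (1 - t) := by gcongr

theorem rpow_le_exp_of_mul_log_le {b t r : ℝ} (hb : 0 < b) (h : t * log b ≤ r) :
    b ^ t ≤ exp r := by
  rw [rpow_def_of_pos hb, mul_comm]
  exact exp_le_exp.mpr h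

end Real

theorem one_add_div_one_add_mul_le_min {α x : ℝ} (hα : 0 < α) (hx : 0 ≤ x) :
    1 + x / (1 + α * x) ≤ min (1 + x) (1 + 1 / α) := by
  have hax : 0 < 1 + α * x := by positivity
  have h₁ : x / (1 + α * x) ≤ x := div_le_self hx (by nlinarith)
  have h₂ : x / (1 + α * x) ≤ 1 / α := by
    rw [div_le_div_iff₀ hax hα]
    linarith
  exact le_min (by linarith) (by linarith)

theorem stmt7_general (x α r lam : ℝ) (hx : 0 ≤ x) (hα : α ∈ Set.Ioc (0:ℝ) (1/2))
    (hlam₁ : lam ∈ Set.Icc (0:ℝ) (r / Real.log (1/α)))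
    (hlam₂ : lam ∈ Set.Ioc (0:ℝ) (1/2)) :
    1 + x / (1 + α * x) ≤ Real.exp (2 * r) * (1 + x) ^ (1 - lam) := by
  obtain ⟨hα₀, hα_half⟩ := hα
  set b := 1 / α
  have hb : 2 ≤ b := by rw [le_div_iff₀ hα₀]; linarith
  have hlog : lam * log b ≤ r := (le_div_iff₀ (log_pos (by linarith))).mp hlam₁.2
  have hpow : (b ^ (2 : ℝ)) ^ lam ≤ exp (2 * r) := by
    rw [← rpow_mul (by positivity)]
    exact rpow_le_exp_of_mul_log_le (by positivity) (by linarith)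
  calc 1 + x / (1 + α * x) ≤ min (1 + x) (1 + b) := one_add_div_one_add_mul_le_min hα₀ hx
    _ ≤ min (b ^ (2 : ℝ)) (1 + x) := by
        rw [min_comm, rpow_two]; gcongr; nlinarith
    _ ≤ (b ^ (2 : ℝ)) ^ lam * (1 + x) ^ (1 - lam) :=
        min_le_rpow_mul_rpow_one_sub (by positivity) (by linarith) hlam₁.1 (by linarith [hlam₂.2])
    _ ≤ exp (2 * r) * (1 + x) ^ (1 - lam) := by gcongr

theorem stmt7 (x α r lam : ℝ) (hx : 0 ≤ x) (hα : α ∈ Set.Ioc (0:ℝ) (1/2))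
    (hr : 0 ≤ r) (hlam₁ : lam ∈ Set.Icc (0:ℝ) (r / Real.log (1/α)))
    (hlam₂ : lam ∈ Set.Ioc (0:ℝ) (1/2)) :
    1 + x / (1 + α * x) ≤ Real.exp (2 * r) * (1 + x) ^ (1 - lam) :=
  stmt7_general x α r lam hx hα hlam₁ hlam₂
end

section
/- Let p, q be probability distributions, α ∈ (0,1/2], and λ ∈ (0,1/2]. Then JS_α(p,q) ≤ (32·e^(2λ·log(1/α))·α/λ)·H_{1−λ}(p,q). -/
set_option maxHeartbeats 1000000

open Real

lemma exp_neg_quad {u : ℝ} (hu : 0 ≤ u) : Real.exp (-u) ≤ 1 - u + u^2/2 := by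
  have h1 := Real.quadratic_le_exp_of_nonneg hu
  have h3 : (0:ℝ) < Real.exp u := Real.exp_pos u
  have hpos : (0:ℝ) < 1 - u + u^2/2 := by nlinarith [sq_nonneg (u-1)]
  rw [Real.exp_neg, inv_le_iff_one_le_mul₀ h3]
  nlinarith [sq_nonneg (u^2), mul_le_mul_of_nonneg_left h1 hpos.le]

lemma exp_neg_one_lt : Real.exp (-1) ≤ 0.368 := by
  rw [Real.exp_neg, inv_le_comm₀ (Real.exp_pos 1) (by norm_num)]
  nlinarith [Real.exp_one_gt_d9]

lemma log21_ge : (3:ℝ) ≤ Real.log 21 := by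
  rw [Real.le_log_iff_exp_le (by norm_num : (0:ℝ) < 21)]
  have h3 : Real.exp 3 = (Real.exp 1)^3 := by
    rw [show (3:ℝ) = ((3:ℕ):ℝ) * 1 by norm_num, Real.exp_nat_mul]
  have h4 : (Real.exp 1)^3 ≤ (2.7182818286:ℝ)^3 :=
    pow_le_pow_left₀ (Real.exp_pos 1).le Real.exp_one_lt_d9.le 3
  rw [h3]; nlinarith

/-- the `x ≤ 1/2` / `x > 1/2` core numeric inequality used in case II. -/
lemma coreA {lam L : ℝ} (hl : 0 < lam) (hl2 : lam ≤ 1/2) (hL : Real.log 2 ≤ L) :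
    lam * L ≤ 32 * Real.exp (2*lam*L) * (1 - lam - Real.exp (-(4*lam*L))) := by
  set x := 2*lam*L with hx
  have hL0 : (0:ℝ) < L := lt_of_lt_of_le (by positivity) (le_trans Real.log_two_gt_d9.le hL)
  have hx0 : 0 < x := by positivity
  have hE1 : (1:ℝ) ≤ Real.exp x := Real.one_le_exp hx0.le
  have hlamx : lam * (1.3862:ℝ) ≤ x := by
    have : (0.6931:ℝ) ≤ L := le_trans (by nlinarith [Real.log_two_gt_d9]) hL
    nlinarith
  rcases le_or_gt x (1/2) with hc | hc
  · -- small x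
    have hq : Real.exp (-(4*lam*L)) ≤ 1 - 2*x + 2*x^2 := by
      have := exp_neg_quad (u := 2*x) (by positivity)
      have h4 : -(4*lam*L) = -(2*x) := by rw [hx]; ring
      rw [h4]; nlinarith
    have hnn : 0.27 * x ≤ 1 - lam - Real.exp (-(4*lam*L)) := by nlinarith
    have hnn0 : (0:ℝ) ≤ 1 - lam - Real.exp (-(4*lam*L)) := by nlinarith
    have : 32 * 1 * (1 - lam - Real.exp (-(4*lam*L)))
        ≤ 32 * Real.exp x * (1 - lam - Real.exp (-(4*lam*L))) := by nlinarith
    nlinarith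
  · -- large x
    have hq : Real.exp (-(4*lam*L)) ≤ 0.368 := by
      refine le_trans ?_ exp_neg_one_lt
      apply Real.exp_le_exp.2
      rw [hx] at hc; nlinarith
    have hnn : (0.132:ℝ) ≤ 1 - lam - Real.exp (-(4*lam*L)) := by nlinarith
    have hEx : x + 1 ≤ Real.exp x := Real.add_one_le_exp x
    have : 32 * Real.exp x * 0.132 ≤ 32 * Real.exp x * (1 - lam - Real.exp (-(4*lam*L))) := by
      nlinarith [Real.exp_pos x]
    nlinarith


lemma key_pointwise (α lam a b : ℝ) (ha : 0 ≤ a) (hb : 0 ≤ b) (hα : 0 < α) (hα2 : α ≤ 1/2)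
    (hl : 0 < lam) (hl2 : lam ≤ 1/2) :
    α * (a * Real.log (a / (α * a + (1 - α) * b))) + (1 - α) * (b * Real.log (b / (α * a + (1 - α) * b)))
    ≤ (32 * Real.exp (2 * lam * Real.log (1 / α)) * α / lam)
        * ((1 - lam) * a + lam * b - a ^ (1 - lam) * b ^ lam) := by
  set L := Real.log (1/α) with hLdef
  clear_value L
  have hαinv : (2:ℝ) ≤ 1/α := by rw [le_div_iff₀ hα]; linarith
  have hL2 : Real.log 2 ≤ L := by rw [hLdef]; exact Real.log_le_log (by norm_num) hαinv
  have hL0 : (0:ℝ) < L := lt_of_lt_of_le (lt_of_lt_of_le (by norm_num) Real.log_two_gt_d9.le) hL2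
  have hLα : L = -Real.log α := by rw [hLdef, one_div, Real.log_inv]
  have hE1 : (1:ℝ) ≤ Real.exp (2*lam*L) := Real.one_le_exp (by positivity)
  have hE0 : (0:ℝ) < Real.exp (2*lam*L) := Real.exp_pos _
  set m := α * a + (1 - α) * b with hm
  have hC0 : (0:ℝ) ≤ 32 * Real.exp (2*lam*L) * α / lam := by positivity
  rcases le_or_gt a (21*b) with hcase | hcase
  · -- Case I : a ≤ 21 b
    rcases eq_or_lt_of_le hb with hb0 | hb0
    · -- b = 0 forces a = 0
      have ha0 : a = 0 := le_antisymm (by linarith) ha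
      rw [ha0, ← hb0]
      rw [Real.zero_rpow (by linarith : (1:ℝ) - lam ≠ 0)]
      simp
    · have hm0 : 0 < m := by rw [hm]; nlinarith
      have hlog1 : a * Real.log (a/m) ≤ a * (a/m - 1) := by
        rcases eq_or_lt_of_le ha with h0 | h0
        · rw [← h0]; simp
        · exact mul_le_mul_of_nonneg_left (Real.log_le_sub_one_of_pos (by positivity)) ha
      have hlog2 : b * Real.log (b/m) ≤ b * (b/m - 1) :=
        mul_le_mul_of_nonneg_left (Real.log_le_sub_one_of_pos (by positivity)) hb
      have hid1 : α * (a * (a/m - 1)) + (1-α) * (b * (b/m - 1)) = α*(1-α)*(a-b)^2/m := by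
        field_simp
        ring
      have hstep1 : α * (a * Real.log (a/m)) + (1-α) * (b * Real.log (b/m))
          ≤ α*(1-α)*(a-b)^2/m := by
        rw [← hid1]
        have h1 := mul_le_mul_of_nonneg_left hlog1 hα.le
        have h2 := mul_le_mul_of_nonneg_left hlog2 (by linarith : (0:ℝ) ≤ 1-α)
        linarith
      set r := Real.sqrt (a*b) with hr
      have hr0 : 0 ≤ r := Real.sqrt_nonneg _
      have hr2 : r^2 = a*b := Real.sq_sqrt (by positivity)
      have hrb : r ≤ 5*b := by
        calc r ≤ Real.sqrt ((5*b)*(5*b)) := Real.sqrt_le_sqrt (by nlinarith)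
          _ = 5*b := Real.sqrt_mul_self (by positivity)
      have hs : 0 ≤ a + b - 2*r := by
        have h1 : r ≤ (a+b)/2 := by
          calc r ≤ Real.sqrt (((a+b)/2)*((a+b)/2)) :=
                Real.sqrt_le_sqrt (by nlinarith [sq_nonneg (a-b)])
            _ = (a+b)/2 := Real.sqrt_mul_self (by positivity)
        linarith
      have hplus : a + b + 2*r ≤ 32*b := by linarith
      have hid2 : (a-b)^2 = (a+b-2*r)*(a+b+2*r) := by linear_combination 4*hr2
      have hAM : a ^ ((1:ℝ)-lam) * b ^ lam ≤ (1-2*lam)*a + 2*lam*r := by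
        rcases eq_or_lt_of_le ha with h0 | h0
        · rw [← h0, Real.zero_rpow (by linarith : (1:ℝ) - lam ≠ 0), zero_mul]
          have h1 : 0 ≤ (1-2*lam)*a := mul_nonneg (by linarith) ha
          have h2 : 0 ≤ 2*lam*r := by positivity
          linarith
        · have e1 : a ^ ((1:ℝ)-lam) * b ^ lam = a ^ ((1:ℝ)-2*lam) * r ^ (2*lam) := by
            have hrr : r ^ (2*lam) = a ^ lam * b ^ lam := by
              rw [hr, Real.sqrt_eq_rpow, ← Real.rpow_mul (by positivity : (0:ℝ) ≤ a*b),
                show (1/2) * (2*lam) = lam by ring, Real.mul_rpow ha hb]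
            rw [hrr, ← mul_assoc, ← Real.rpow_add h0]
            ring_nf
          rw [e1]
          have := Real.geom_mean_le_arith_mean2_weighted
            (by linarith : (0:ℝ) ≤ 1-2*lam) (by positivity : (0:ℝ) ≤ 2*lam) ha hr0 (by ring)
          linarith
      have hpsi : lam*(a+b-2*r) ≤ (1-lam)*a + lam*b - a ^ ((1:ℝ)-lam) * b ^ lam := by
        nlinarith [hAM]
      have hmb : (1-α)*b ≤ m := by rw [hm]; nlinarith
      have hstep3 : α*(1-α)*(a-b)^2/m
          ≤ (32 * Real.exp (2*lam*L) * α / lam) * (lam*(a+b-2*r)) := by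
        have hClam : (32 * Real.exp (2*lam*L) * α / lam) * (lam*(a+b-2*r))
            = 32*Real.exp (2*lam*L)*α*(a+b-2*r) := by field_simp
        rw [hClam, div_le_iff₀ hm0, hid2]
        have h1 : (1-α)*((a+b-2*r)*(a+b+2*r)) ≤ (1-α)*((a+b-2*r)*(32*b)) :=
          mul_le_mul_of_nonneg_left (mul_le_mul_of_nonneg_left hplus hs) (by linarith)
        have h2 : 32*(a+b-2*r)*((1-α)*b) ≤ 32*(a+b-2*r)*m :=
          mul_le_mul_of_nonneg_left hmb (by linarith)
        have hnn : 0 ≤ α*((a+b-2*r)*m) := mul_nonneg hα.le (mul_nonneg hs hm0.le)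
        have h3 := mul_le_mul_of_nonneg_right hE1 hnn
        nlinarith
      calc α * (a * Real.log (a/m)) + (1-α) * (b * Real.log (b/m))
          ≤ α*(1-α)*(a-b)^2/m := hstep1
        _ ≤ (32 * Real.exp (2*lam*L) * α / lam) * (lam*(a+b-2*r)) := hstep3
        _ ≤ (32 * Real.exp (2*lam*L) * α / lam)
              * ((1-lam)*a + lam*b - a ^ ((1:ℝ)-lam) * b ^ lam) :=
            mul_le_mul_of_nonneg_left hpsi hC0
  · -- Case II : a > 21 b
    have ha0 : 0 < a := by nlinarith
    have hm0 : 0 < m := by rw [hm]; nlinarith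
    have hba : b ≤ a := by nlinarith
    have hbm : b ≤ m := by rw [hm]; nlinarith
    have hterm2 : (1-α) * (b * Real.log (b/m)) ≤ 0 := by
      rcases eq_or_lt_of_le hb with h0 | h0
      · rw [← h0]; simp
      · have h1 : Real.log (b/m) ≤ 0 :=
          Real.log_nonpos (by positivity) (by rw [div_le_one hm0]; exact hbm)
        have h2 : b * Real.log (b/m) ≤ 0 := mul_nonpos_of_nonneg_of_nonpos hb h1
        nlinarith
    have hαa : α * a ≤ m := by rw [hm]; nlinarith
    have hlogL : Real.log (a/m) ≤ L := by
      have h1 : a/m ≤ 1/α := by rw [div_le_div_iff₀ hm0 hα]; nlinarith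
      calc Real.log (a/m) ≤ Real.log (1/α) := Real.log_le_log (by positivity) h1
        _ = L := by rw [hLdef]
    have hphi : α * (a * Real.log (a/m)) + (1-α) * (b * Real.log (b/m))
        ≤ α * (a * Real.log (a/m)) := by linarith
    rcases le_or_gt b (α^4 * a) with hsub | hsub
    · -- Subcase A : b ≤ α⁴ a
      have hrp : a ^ ((1:ℝ)-lam) * b ^ lam ≤ a * Real.exp (-(4*lam*L)) := by
        have h1 : b ^ lam ≤ (α^4 * a) ^ lam := Real.rpow_le_rpow hb hsub hl.le
        have h2 : (α^4 * a) ^ lam = α ^ ((4:ℝ)*lam) * a ^ lam := by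
          rw [Real.mul_rpow (by positivity) ha, ← Real.rpow_natCast α 4,
            ← Real.rpow_mul hα.le]
          norm_num
        have h3 : α ^ ((4:ℝ)*lam) = Real.exp (-(4*lam*L)) := by
          rw [Real.rpow_def_of_pos hα, hLα]; ring_nf
        have h4 : a ^ ((1:ℝ)-lam) * a ^ lam = a := by
          rw [← Real.rpow_add ha0]; norm_num
        calc a ^ ((1:ℝ)-lam) * b ^ lam ≤ a ^ ((1:ℝ)-lam) * ((α^4*a) ^ lam) :=
              mul_le_mul_of_nonneg_left h1 (by positivity)
          _ = Real.exp (-(4*lam*L)) * (a ^ ((1:ℝ)-lam) * a ^ lam) := by rw [h2, h3]; ring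
          _ = a * Real.exp (-(4*lam*L)) := by rw [h4]; ring
      have hcore := coreA hl hl2 hL2
      have hψ : a * (1 - lam - Real.exp (-(4*lam*L)))
          ≤ (1-lam)*a + lam*b - a ^ ((1:ℝ)-lam) * b ^ lam := by
        have h1 : 0 ≤ lam * b := by positivity
        nlinarith [hrp]
      have hmid : α * (a * L) ≤ (32 * Real.exp (2*lam*L) * α / lam)
          * (a * (1 - lam - Real.exp (-(4*lam*L)))) := by
        have h5 := mul_le_mul_of_nonneg_left hcore (show (0:ℝ) ≤ α * a / lam by positivity)
        have e1 : α * a / lam * (lam * L) = α * (a * L) := by field_simp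
        have e2 : α * a / lam * (32 * Real.exp (2*lam*L) * (1 - lam - Real.exp (-(4*lam*L))))
            = (32 * Real.exp (2*lam*L) * α / lam) * (a * (1 - lam - Real.exp (-(4*lam*L)))) := by
          field_simp
        rw [e1, e2] at h5; exact h5
      calc α * (a * Real.log (a/m)) + (1-α) * (b * Real.log (b/m))
          ≤ α * (a * Real.log (a/m)) := hphi
        _ ≤ α * (a * L) :=
            mul_le_mul_of_nonneg_left (mul_le_mul_of_nonneg_left hlogL ha) hα.le
        _ ≤ (32 * Real.exp (2*lam*L) * α / lam) * (a * (1 - lam - Real.exp (-(4*lam*L)))) := hmid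
        _ ≤ (32 * Real.exp (2*lam*L) * α / lam)
              * ((1-lam)*a + lam*b - a ^ ((1:ℝ)-lam) * b ^ lam) :=
            mul_le_mul_of_nonneg_left hψ hC0
    · -- Subcase B : α⁴ a < b < a/21
      have hb0 : 0 < b := lt_of_le_of_lt (by positivity) hsub
      set M := Real.log a - Real.log b with hM
      clear_value M
      have hMab : M = Real.log (a/b) := by rw [hM]; exact (Real.log_div (ne_of_gt ha0) (ne_of_gt hb0)).symm
      have hM3 : (3:ℝ) ≤ M := by
        rw [hMab]
        refine le_trans log21_ge (Real.log_le_log (by norm_num) ?_)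
        rw [le_div_iff₀ hb0]; linarith
      have hX : a ^ ((1:ℝ)-lam) * b ^ lam = a * Real.exp (-(lam*M)) := by
        rw [Real.rpow_def_of_pos ha0, Real.rpow_def_of_pos hb0, ← Real.exp_add]
        conv_rhs => rw [← Real.exp_log ha0]
        rw [← Real.exp_add]
        congr 1
        rw [hM]; ring
      have hlogM : Real.log (a/m) ≤ M + Real.log 2 := by
        have hb2 : 0 < b/2 := by linarith
        have hmb2 : b/2 ≤ m := by rw [hm]; nlinarith
        have h1 : a/m ≤ a/(b/2) := by gcongr
        have h2 : a/(b/2) = 2*(a/b) := by field_simp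
        have h3 : Real.log (a/m) ≤ Real.log (2*(a/b)) := by
          rw [← h2]; exact Real.log_le_log (by positivity) (h2 ▸ h1)
        rw [Real.log_mul (by norm_num) (by positivity), ← hMab] at h3
        linarith
      have hψB : a * ((1-lam) - Real.exp (-(lam*M)))
          ≤ (1-lam)*a + lam*b - a ^ ((1:ℝ)-lam) * b ^ lam := by
        rw [hX]
        have h1 : 0 ≤ lam * b := by positivity
        nlinarith
      rcases le_or_gt (lam*M) 1 with hlm | hlm
      · -- lam·M ≤ 1
        have hq : Real.exp (-(lam*M)) ≤ 1 - lam*M/2 := by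
          have h := exp_neg_quad (u := lam*M) (by positivity)
          have hz0 : (0:ℝ) ≤ lam*M := by positivity
          have hz2 : (lam*M)^2 ≤ lam*M := by
            rw [sq]; nlinarith [mul_le_mul_of_nonneg_right hlm hz0]
          linarith
        have hψ2 : lam * (a * (M/2 - 1)) ≤ (1-lam)*a + lam*b - a ^ ((1:ℝ)-lam) * b ^ lam := by
          have h1 : a * (lam*M/2 - lam) ≤ a * ((1-lam) - Real.exp (-(lam*M))) :=
            mul_le_mul_of_nonneg_left (by linarith) ha
          nlinarith [hψB]
        have hnum : M + Real.log 2 ≤ 32 * Real.exp (2*lam*L) * (M/2 - 1) := by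
          have hlt2 := Real.log_two_lt_d9
          have h1 := mul_le_mul_of_nonneg_right hE1 (show (0:ℝ) ≤ M/2 - 1 by linarith)
          nlinarith
        calc α * (a * Real.log (a/m)) + (1-α) * (b * Real.log (b/m))
            ≤ α * (a * Real.log (a/m)) := hphi
          _ ≤ α * (a * (M + Real.log 2)) :=
              mul_le_mul_of_nonneg_left (mul_le_mul_of_nonneg_left hlogM ha) hα.le
          _ ≤ α * (a * (32 * Real.exp (2*lam*L) * (M/2-1))) :=
              mul_le_mul_of_nonneg_left (mul_le_mul_of_nonneg_left hnum ha) hα.le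
          _ = (32 * Real.exp (2*lam*L) * α / lam) * (lam * (a * (M/2 - 1))) := by
              field_simp
          _ ≤ (32 * Real.exp (2*lam*L) * α / lam)
                * ((1-lam)*a + lam*b - a ^ ((1:ℝ)-lam) * b ^ lam) :=
              mul_le_mul_of_nonneg_left hψ2 hC0
      · -- lam·M > 1
        have hq : Real.exp (-(lam*M)) ≤ 0.368 :=
          le_trans (Real.exp_le_exp.2 (by linarith)) exp_neg_one_lt
        have hψ3 : a * 0.132 ≤ (1-lam)*a + lam*b - a ^ ((1:ℝ)-lam) * b ^ lam := by
          refine le_trans ?_ hψB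
          have h1 : (0.132:ℝ) ≤ (1-lam) - Real.exp (-(lam*M)) := by linarith
          calc a * 0.132 ≤ a * ((1-lam) - Real.exp (-(lam*M))) :=
                mul_le_mul_of_nonneg_left h1 ha
            _ = a * (1 - lam - Real.exp (-(lam*M))) := by ring
        have hnum : lam * L ≤ 32 * Real.exp (2*lam*L) * 0.132 := by
          have hEx := Real.add_one_le_exp (2*lam*L)
          linarith
        have hmid : α * (a * L) ≤ (32 * Real.exp (2*lam*L) * α / lam) * (a * 0.132) := by
          have h5 := mul_le_mul_of_nonneg_left hnum (show (0:ℝ) ≤ α * a / lam by positivity)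
          have e1 : α * a / lam * (lam * L) = α * (a * L) := by field_simp
          have e2 : α * a / lam * (32 * Real.exp (2*lam*L) * 0.132)
              = (32 * Real.exp (2*lam*L) * α / lam) * (a * 0.132) := by field_simp
          rw [e1, e2] at h5; exact h5
        calc α * (a * Real.log (a/m)) + (1-α) * (b * Real.log (b/m))
            ≤ α * (a * Real.log (a/m)) := hphi
          _ ≤ α * (a * L) :=
              mul_le_mul_of_nonneg_left (mul_le_mul_of_nonneg_left hlogL ha) hα.le
          _ ≤ (32 * Real.exp (2*lam*L) * α / lam) * (a * 0.132) := hmid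
          _ ≤ (32 * Real.exp (2*lam*L) * α / lam)
                * ((1-lam)*a + lam*b - a ^ ((1:ℝ)-lam) * b ^ lam) :=
              mul_le_mul_of_nonneg_left hψ3 hC0

/-- helper: |t log(t/mm)| ≤ L t + mm when t ≤ K mm with log K ≤ L -/
lemma abs_term_bound {t mm L : ℝ} (ht : 0 ≤ t) (hmm : 0 ≤ mm) (hL : 0 ≤ L)
    (htm : t * Real.exp (-L) ≤ mm) : |t * Real.log (t/mm)| ≤ L * t + mm := by
  rcases eq_or_lt_of_le ht with h0 | h0
  · rw [← h0]; simp; positivity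
  · have hmm0 : 0 < mm := lt_of_lt_of_le (by positivity) htm
    have hup : t * Real.log (t/mm) ≤ t * L := by
      apply mul_le_mul_of_nonneg_left _ ht
      have h1 : t/mm ≤ Real.exp L := by
        rw [div_le_iff₀ hmm0]
        calc t = t * Real.exp (-L) * Real.exp L := by
              rw [mul_assoc, ← Real.exp_add]; simp
          _ ≤ mm * Real.exp L := mul_le_mul_of_nonneg_right htm (Real.exp_pos L).le
          _ = Real.exp L * mm := mul_comm _ _
      calc Real.log (t/mm) ≤ Real.log (Real.exp L) := Real.log_le_log (by positivity) h1
        _ = L := Real.log_exp L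
    have hlow : t - mm ≤ t * Real.log (t/mm) := by
      have h1 : Real.log (mm/t) ≤ mm/t - 1 := Real.log_le_sub_one_of_pos (by positivity)
      have h2 : t * Real.log (mm/t) ≤ t * (mm/t - 1) := mul_le_mul_of_nonneg_left h1 ht
      have h3 : t * (mm/t - 1) = mm - t := by field_simp
      have h4 : Real.log (t/mm) = -Real.log (mm/t) := by
        rw [← Real.log_inv]; congr 1; field_simp
      rw [h4]; nlinarith
    rw [abs_le]
    constructor
    · nlinarith
    · nlinarith [mul_nonneg hL ht]

/-- Main `f`-divergence inequality:
`JS_α(p,q) ≤ (32 e^{2λ log(1/α)} α / λ) · H_{1−λ}(p,q)`. -/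
theorem stmt15 (p q : ℕ → ℝ) (hp : ∀ i, 0 ≤ p i) (hq : ∀ i, 0 ≤ q i)
    (hp1 : ∑' i, p i = 1) (hq1 : ∑' i, q i = 1)
    (α lam : ℝ) (hα : α ∈ Set.Ioc (0:ℝ) (1/2)) (hlam : lam ∈ Set.Ioc (0:ℝ) (1/2)) :
    α * (∑' i, p i * Real.log (p i / (α * p i + (1 - α) * q i)))
      + (1 - α) * (∑' i, q i * Real.log (q i / (α * p i + (1 - α) * q i)))
    ≤ (32 * Real.exp (2 * lam * Real.log (1 / α)) * α / lam)
        * (1 - ∑' i, (p i) ^ (1 - lam) * (q i) ^ lam) := by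
  obtain ⟨hα1, hα2⟩ := hα
  obtain ⟨hl1, hl2⟩ := hlam
  set L := Real.log (1/α) with hLdef
  clear_value L
  have hαinv : (2:ℝ) ≤ 1/α := by rw [le_div_iff₀ hα1]; linarith
  have hL2 : Real.log 2 ≤ L := by rw [hLdef]; exact Real.log_le_log (by norm_num) hαinv
  have hL0 : (0:ℝ) ≤ L := le_trans (Real.log_nonneg (by norm_num)) hL2
  have hsp : Summable p := by
    by_contra h
    rw [tsum_eq_zero_of_not_summable h] at hp1; norm_num at hp1
  have hsq : Summable q := by
    by_contra h
    rw [tsum_eq_zero_of_not_summable h] at hq1; norm_num at hq1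
  set C := 32 * Real.exp (2 * lam * L) * α / lam with hC
  have hC0 : 0 ≤ C := by positivity
  -- summability of the three series
  have hexpL : Real.exp (-L) ≤ 1 := Real.exp_le_one_iff.2 (by linarith)
  have hb1 : ∀ i, |p i * Real.log (p i / (α * p i + (1 - α) * q i))|
      ≤ L * p i + (α * p i + (1 - α) * q i) := by
    intro i
    apply abs_term_bound (hp i) (by nlinarith [hp i, hq i]) hL0
    have h1 : Real.exp (-L) = α := by
      rw [hLdef, one_div, Real.log_inv, neg_neg, Real.exp_log hα1]
    rw [h1]
    nlinarith [mul_nonneg (show (0:ℝ) ≤ 1-α by linarith) (hq i), hp i]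
  have hb2 : ∀ i, |q i * Real.log (q i / (α * p i + (1 - α) * q i))|
      ≤ L * q i + (α * p i + (1 - α) * q i) := by
    intro i
    apply abs_term_bound (hq i) (by nlinarith [hp i, hq i]) hL0
    have h1 : Real.exp (-L) = α := by
      rw [hLdef, one_div, Real.log_inv, neg_neg, Real.exp_log hα1]
    rw [h1]
    nlinarith [mul_nonneg (show (0:ℝ) ≤ 1-2*α by linarith) (hq i),
      mul_nonneg hα1.le (hp i)]
  have hsm : Summable (fun i => L * p i + (α * p i + (1 - α) * q i)) :=
    ((hsp.mul_left L).add ((hsp.mul_left α).add (hsq.mul_left (1-α))))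
  have hsm2 : Summable (fun i => L * q i + (α * p i + (1 - α) * q i)) :=
    ((hsq.mul_left L).add ((hsp.mul_left α).add (hsq.mul_left (1-α))))
  have hS1 : Summable (fun i => p i * Real.log (p i / (α * p i + (1 - α) * q i))) := by
    apply Summable.of_abs
    exact Summable.of_nonneg_of_le (fun i => abs_nonneg _) hb1 hsm
  have hS2 : Summable (fun i => q i * Real.log (q i / (α * p i + (1 - α) * q i))) := by
    apply Summable.of_abs
    exact Summable.of_nonneg_of_le (fun i => abs_nonneg _) hb2 hsm2
  have hgle : ∀ i, (p i) ^ (1 - lam) * (q i) ^ lam ≤ (1-lam) * p i + lam * q i := fun i =>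
    Real.geom_mean_le_arith_mean2_weighted (by linarith) hl1.le (hp i) (hq i) (by ring)
  have hg0 : ∀ i, 0 ≤ (p i) ^ (1 - lam) * (q i) ^ lam := fun i => mul_nonneg (Real.rpow_nonneg (hp i) _) (Real.rpow_nonneg (hq i) _)
  have hSg : Summable (fun i => (p i) ^ (1 - lam) * (q i) ^ lam) :=
    Summable.of_nonneg_of_le hg0 hgle ((hsp.mul_left (1-lam)).add (hsq.mul_left lam))
  have hSw : Summable (fun i => (1-lam) * p i + lam * q i) :=
    (hsp.mul_left (1-lam)).add (hsq.mul_left lam)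
  -- rewrite LHS as a single tsum
  have hLHS : α * (∑' i, p i * Real.log (p i / (α * p i + (1 - α) * q i)))
      + (1 - α) * (∑' i, q i * Real.log (q i / (α * p i + (1 - α) * q i)))
      = ∑' i, (α * (p i * Real.log (p i / (α * p i + (1 - α) * q i)))
          + (1 - α) * (q i * Real.log (q i / (α * p i + (1 - α) * q i)))) := by
    rw [← tsum_mul_left, ← tsum_mul_left,
      ← Summable.tsum_add (hS1.mul_left α) (hS2.mul_left (1-α))]
  -- rewrite RHS as a single tsum
  have hw : ∑' i, ((1-lam) * p i + lam * q i) = 1 := by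
    rw [Summable.tsum_add (hsp.mul_left (1-lam)) (hsq.mul_left lam), tsum_mul_left, tsum_mul_left,
      hp1, hq1]
    ring
  have hRHS : C * (1 - ∑' i, (p i) ^ (1 - lam) * (q i) ^ lam)
      = ∑' i, C * (((1-lam) * p i + lam * q i) - (p i) ^ (1 - lam) * (q i) ^ lam) := by
    rw [tsum_mul_left, Summable.tsum_sub hSw hSg, hw]
  rw [hLHS, hRHS]
  apply Summable.tsum_le_tsum _ ((hS1.mul_left α).add (hS2.mul_left (1-α))) ((hSw.sub hSg).mul_left C)
  intro i
  have hkey := key_pointwise α lam (p i) (q i) (hp i) (hq i) hα1 hα2 hl1 hl2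
  rw [← hLdef] at hkey  -- replace log(1/α) by L if needed
  calc α * (p i * Real.log (p i / (α * p i + (1 - α) * q i)))
        + (1 - α) * (q i * Real.log (q i / (α * p i + (1 - α) * q i)))
      ≤ C * ((1 - lam) * p i + lam * q i - (p i) ^ (1 - lam) * (q i) ^ lam) := by
        rw [hC]; exact hkey
    _ = C * (((1-lam) * p i + lam * q i) - (p i) ^ (1 - lam) * (q i) ^ lam) := by ring
end

section
/- Let p, q be Bernoulli distributions with biases p ∈ [0,1/2] and q ∈ (0,1), α ∈ (0,1/2], r > 0 with λ := r/log(1/α) ∈ (0,1/2]. Then (d²/dq²) JS_α(Ber(p), Ber(q)) ≤ (32·e^(2r)·α/r) · (d²/dq²) (log(1/α)·H_{1−λ}(Ber(p), Ber(q))). -/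
private lemma key_core {α r lam a x : ℝ} (hα0 : 0 < α) (hr : 0 < r)
    (hlam0 : 0 < lam) (hlam2 : lam ≤ 1/2) (hαe : α = Real.exp (-(r/lam)))
    (ha : 0 ≤ a) (hx : 0 < x) (hα1 : α ≤ 1/2) :
    a ^ lam * x ^ (1 - lam) ≤ 2 * Real.exp (2*r) * (α * a + (1-α) * x) := by
  have hE := Real.exp_pos (2*r)
  rcases le_or_gt (a ^ lam) (Real.exp (2*r) * x ^ lam) with h | h
  · have hxpow : x ^ lam * x ^ (1-lam) = x := by
      rw [← Real.rpow_add hx]; norm_num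
    have h1 : a ^ lam * x ^ (1-lam) ≤ Real.exp (2*r) * x := by
      calc a^lam * x^(1-lam) ≤ (Real.exp (2*r) * x^lam) * x^(1-lam) :=
            mul_le_mul_of_nonneg_right h (Real.rpow_nonneg hx.le _)
        _ = Real.exp (2*r) * (x^lam * x^(1-lam)) := by ring
        _ = Real.exp (2*r) * x := by rw [hxpow]
    nlinarith [mul_nonneg (mul_nonneg hα0.le ha) hE.le,
      mul_nonneg (mul_nonneg hE.le hx.le) (by linarith : (0:ℝ) ≤ 1 - 2*α)]
  · have ha0 : 0 < a := by
      rcases ha.lt_or_eq with h' | h'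
      · exact h'
      · exfalso; rw [← h', Real.zero_rpow hlam0.ne'] at h
        nlinarith [Real.rpow_pos_of_pos hx lam]
    have hc : (a * Real.exp (-(2*r/lam))) ^ lam = a ^ lam * Real.exp (-(2*r)) := by
      rw [Real.mul_rpow ha (Real.exp_pos _).le, ← Real.exp_mul]
      congr 2
      field_simp
    have hxle : x ≤ a * Real.exp (-(2*r/lam)) := by
      rw [← Real.rpow_le_rpow_iff hx.le (by positivity) hlam0, hc]
      have h2 : Real.exp (-(2*r)) * (Real.exp (2*r) * x ^ lam) ≤ Real.exp (-(2*r)) * a^lam :=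
        mul_le_mul_of_nonneg_left h.le (Real.exp_pos _).le
      calc x ^ lam = Real.exp (-(2*r)) * (Real.exp (2*r) * x^lam) := by
            rw [← mul_assoc, ← Real.exp_add, neg_add_cancel, Real.exp_zero, one_mul]
        _ ≤ Real.exp (-(2*r)) * a^lam := h2
        _ = a^lam * Real.exp (-(2*r)) := mul_comm _ _
    have h3 : x ^ (1-lam) ≤ (a * Real.exp (-(2*r/lam))) ^ (1-lam) :=
      Real.rpow_le_rpow hx.le hxle (by linarith)
    have h4 : a ^ lam * x ^ (1-lam) ≤ a * Real.exp (-(2*r/lam) * (1-lam)) := by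
      calc a^lam * x^(1-lam) ≤ a^lam * (a * Real.exp (-(2*r/lam)))^(1-lam) :=
            mul_le_mul_of_nonneg_left h3 (by positivity)
        _ = a * Real.exp (-(2*r/lam) * (1-lam)) := by
            rw [Real.mul_rpow ha0.le (Real.exp_pos _).le, ← mul_assoc, ← Real.rpow_add ha0,
                ← Real.exp_mul]
            norm_num
    have h5 : Real.exp (-(2*r/lam) * (1-lam)) ≤ 2 * Real.exp (2*r) * α := by
      rw [hαe]
      have e0 : -(2*r/lam) * (1-lam) = (2*r - r/lam) + -(r/lam) := by field_simp; ring
      rw [e0, Real.exp_add]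
      have h6 : Real.exp (2*r - r/lam) ≤ Real.exp (2*r) := by
        apply Real.exp_le_exp.2; have : 0 < r/lam := by positivity
        linarith
      nlinarith [Real.exp_pos (-(r/lam)), Real.exp_pos (2*r - r/lam)]
    calc a^lam * x^(1-lam) ≤ a * Real.exp (-(2*r/lam)*(1-lam)) := h4
      _ ≤ a * (2*Real.exp (2*r)*α) := mul_le_mul_of_nonneg_left h5 ha0.le
      _ ≤ 2*Real.exp (2*r) * (α*a + (1-α)*x) := by
          nlinarith [mul_nonneg hE.le (mul_nonneg (by linarith : (0:ℝ) ≤ 1-α) hx.le)]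

private lemma key_div {α r lam a x : ℝ} (hα0 : 0 < α) (hr : 0 < r)
    (hlam0 : 0 < lam) (hlam2 : lam ≤ 1/2) (hαe : α = Real.exp (-(r/lam)))
    (ha : 0 ≤ a) (hx : 0 < x) (hα1 : α ≤ 1/2) :
    a / (x * (α*a + (1-α)*x)) ≤ 2 * Real.exp (2*r) * (a ^ (1-lam) * x ^ (lam-2)) := by
  have hM : 0 < α*a + (1-α)*x := by nlinarith
  rcases ha.lt_or_eq with ha0 | ha0
  swap
  · rw [← ha0, Real.zero_rpow (by intro hh; rw [sub_eq_zero] at hh; linarith : (1:ℝ)-lam ≠ 0)]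
    simp
  · have hkey := key_core hα0 hr hlam0 hlam2 hαe ha hx hα1
    rw [div_le_iff₀ (by positivity)]
    have hmul := mul_le_mul_of_nonneg_right hkey
      (by positivity : (0:ℝ) ≤ a^(1-lam) * x^(lam-1))
    have e1 : a^lam * x^(1-lam) * (a^(1-lam) * x^(lam-1)) = a := by
      rw [show a^lam * x^(1-lam) * (a^(1-lam)*x^(lam-1)) = (a^lam*a^(1-lam))*(x^(1-lam)*x^(lam-1)) from by ring,
          ← Real.rpow_add ha0, ← Real.rpow_add hx]
      norm_num
    have e2 : 2*Real.exp (2*r)*(α*a+(1-α)*x) * (a^(1-lam)*x^(lam-1))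
            = 2*Real.exp (2*r)*(a^(1-lam)*x^(lam-2))*(x*(α*a+(1-α)*x)) := by
      have e3 : x^(lam-2)*x = x^(lam-1) := by
        rw [← Real.rpow_add_one hx.ne']; congr 1; ring
      rw [← e3]; ring
    rw [e1, e2] at hmul; exact hmul

private lemma hasDerivAt_F (p α : ℝ) (hp0 : 0 ≤ p) (hp1 : p < 1) (hα0 : 0 < α)
    (hα1 : α < 1) {x : ℝ} (hx0 : 0 < x) (hx1 : x < 1) :
    HasDerivAt (fun y : ℝ =>
        α * (p * Real.log (p / (α * p + (1 - α) * y))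
              + (1 - p) * Real.log ((1 - p) / (α * (1 - p) + (1 - α) * (1 - y))))
        + (1 - α) * (y * Real.log (y / (α * p + (1 - α) * y))
              + (1 - y) * Real.log ((1 - y) / (α * (1 - p) + (1 - α) * (1 - y)))))
      ((1-α) * (Real.log x - Real.log (α*p+(1-α)*x) - Real.log (1-x)
          + Real.log (α*(1-p)+(1-α)*(1-x)))) x := by
  have h1x : 0 < 1 - x := by linarith
  have h1p : 0 < 1 - p := by linarith
  have hMx : 0 < α*p+(1-α)*x := by nlinarith
  have hMcx : 0 < α*(1-p)+(1-α)*(1-x) := by nlinarith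
  have hdM : HasDerivAt (fun y : ℝ => α*p+(1-α)*y) (1-α) x := by
    simpa using ((hasDerivAt_id x).const_mul (1-α)).const_add (α*p)
  have hd1y : HasDerivAt (fun y : ℝ => 1 - y) (-1) x := (hasDerivAt_id x).const_sub 1
  have hdMc : HasDerivAt (fun y : ℝ => α*(1-p)+(1-α)*(1-y)) (-(1-α)) x := by
    simpa using (hd1y.const_mul (1-α)).const_add (α*(1-p))
  have hlM : HasDerivAt (fun y : ℝ => Real.log (α*p+(1-α)*y)) ((1-α)/(α*p+(1-α)*x)) x :=
    hdM.log hMx.ne'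
  have hlMc : HasDerivAt (fun y : ℝ => Real.log (α*(1-p)+(1-α)*(1-y)))
      (-(1-α)/(α*(1-p)+(1-α)*(1-x))) x := hdMc.log hMcx.ne'
  have hd1 : HasDerivAt (fun y : ℝ => y * Real.log y) (1 * Real.log x + x * x⁻¹) x :=
    (hasDerivAt_id x).mul (Real.hasDerivAt_log hx0.ne')
  have hd2 : HasDerivAt (fun y : ℝ => y * Real.log (α*p+(1-α)*y))
      (1 * Real.log (α*p+(1-α)*x) + x * ((1-α)/(α*p+(1-α)*x))) x := (hasDerivAt_id x).mul hlM
  have hd3 : HasDerivAt (fun y : ℝ => (1-y) * Real.log (1-y))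
      ((-1) * Real.log (1-x) + (1-x) * ((-1)/(1-x))) x := hd1y.mul (hd1y.log h1x.ne')
  have hd4 : HasDerivAt (fun y : ℝ => (1-y) * Real.log (α*(1-p)+(1-α)*(1-y)))
      ((-1) * Real.log (α*(1-p)+(1-α)*(1-x))
        + (1-x) * (-(1-α)/(α*(1-p)+(1-α)*(1-x)))) x := hd1y.mul hlMc
  have hEF : HasDerivAt (fun y : ℝ =>
      (α*(p*Real.log p) + α*((1-p)*Real.log (1-p))
        + (-(α*p))*Real.log (α*p+(1-α)*y)
        + (-(α*(1-p)))*Real.log (α*(1-p)+(1-α)*(1-y))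
        + (1-α)*(y*Real.log y)
        + (-(1-α))*(y*Real.log (α*p+(1-α)*y))
        + (1-α)*((1-y)*Real.log (1-y))
        + (-(1-α))*((1-y)*Real.log (α*(1-p)+(1-α)*(1-y)))))
      ((1-α) * (Real.log x - Real.log (α*p+(1-α)*x) - Real.log (1-x)
          + Real.log (α*(1-p)+(1-α)*(1-x)))) x := by
    have hE := (((((((hasDerivAt_const x (α*(p*Real.log p) + α*((1-p)*Real.log (1-p)))).add
      (hlM.const_mul (-(α*p)))).add (hlMc.const_mul (-(α*(1-p))))).add
      (hd1.const_mul (1-α))).add (hd2.const_mul (-(1-α)))).add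
      (hd3.const_mul (1-α))).add (hd4.const_mul (-(1-α))))
    refine hE.congr_deriv ?_
    field_simp
    ring
  apply hEF.congr_of_eventuallyEq
  apply Filter.eventuallyEq_of_mem (isOpen_Ioo.mem_nhds (Set.mem_Ioo.2 ⟨hx0, hx1⟩))
  intro y hy
  obtain ⟨hy0, hy1⟩ := hy
  have h1y : 0 < 1 - y := by linarith
  have hMy : 0 < α*p+(1-α)*y := by nlinarith
  have hMcy : 0 < α*(1-p)+(1-α)*(1-y) := by nlinarith
  have e1 : p * Real.log (p / (α*p+(1-α)*y)) = p * Real.log p - p * Real.log (α*p+(1-α)*y) := by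
    rcases hp0.lt_or_eq with h | h
    · rw [Real.log_div h.ne' hMy.ne']; ring
    · simp [← h]
  have e2 : (1-p) * Real.log ((1-p) / (α*(1-p)+(1-α)*(1-y)))
      = (1-p) * Real.log (1-p) - (1-p) * Real.log (α*(1-p)+(1-α)*(1-y)) := by
    rw [Real.log_div h1p.ne' hMcy.ne']; ring
  have e3 : y * Real.log (y / (α*p+(1-α)*y)) = y * Real.log y - y * Real.log (α*p+(1-α)*y) := by
    rw [Real.log_div hy0.ne' hMy.ne']; ring
  have e4 : (1-y) * Real.log ((1-y) / (α*(1-p)+(1-α)*(1-y)))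
      = (1-y) * Real.log (1-y) - (1-y) * Real.log (α*(1-p)+(1-α)*(1-y)) := by
    rw [Real.log_div h1y.ne' hMcy.ne']; ring
  simp only [e1, e2, e3, e4]
  ring

private lemma hasDerivAt_F1 (p α : ℝ) (hp0 : 0 ≤ p) (hp1 : p < 1) (hα0 : 0 < α)
    (hα1 : α < 1) {x : ℝ} (hx0 : 0 < x) (hx1 : x < 1) :
    HasDerivAt (fun y : ℝ => (1-α) * (Real.log y - Real.log (α*p+(1-α)*y) - Real.log (1-y)
          + Real.log (α*(1-p)+(1-α)*(1-y))))
      ((1-α) * (x⁻¹ - (1-α)/(α*p+(1-α)*x) - (-1)/(1-x)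
          + -(1-α)/(α*(1-p)+(1-α)*(1-x)))) x := by
  have h1x : 0 < 1 - x := by linarith
  have h1p : 0 < 1 - p := by linarith
  have hMx : 0 < α*p+(1-α)*x := by nlinarith
  have hMcx : 0 < α*(1-p)+(1-α)*(1-x) := by nlinarith
  have hdM : HasDerivAt (fun y : ℝ => α*p+(1-α)*y) (1-α) x := by
    simpa using ((hasDerivAt_id x).const_mul (1-α)).const_add (α*p)
  have hd1y : HasDerivAt (fun y : ℝ => 1 - y) (-1) x := (hasDerivAt_id x).const_sub 1
  have hdMc : HasDerivAt (fun y : ℝ => α*(1-p)+(1-α)*(1-y)) (-(1-α)) x := by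
    simpa using (hd1y.const_mul (1-α)).const_add (α*(1-p))
  have hlM : HasDerivAt (fun y : ℝ => Real.log (α*p+(1-α)*y)) ((1-α)/(α*p+(1-α)*x)) x :=
    hdM.log hMx.ne'
  have hlMc : HasDerivAt (fun y : ℝ => Real.log (α*(1-p)+(1-α)*(1-y)))
      (-(1-α)/(α*(1-p)+(1-α)*(1-x))) x := hdMc.log hMcx.ne'
  have hl1y : HasDerivAt (fun y : ℝ => Real.log (1-y)) ((-1)/(1-x)) x := hd1y.log h1x.ne'
  exact ((((Real.hasDerivAt_log hx0.ne').sub hlM).sub hl1y).add hlMc).const_mul (1-α)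

private lemma hasDerivAt_G (L c P1 P2 : ℝ) {x : ℝ} (hx0 : x ≠ 0) (hx1 : 1 - x ≠ 0) :
    HasDerivAt (fun y : ℝ => L * (1 - P1 * y ^ c - P2 * (1-y) ^ c))
      (L * (0 - P1 * (c * x ^ (c-1)) - P2 * (c * (1-x) ^ (c-1) * -1))) x := by
  have h1 : HasDerivAt (fun y : ℝ => y ^ c) (c * x ^ (c-1)) x :=
    Real.hasDerivAt_rpow_const (Or.inl hx0)
  have h2 : HasDerivAt (fun y : ℝ => (1-y) ^ c) (c * (1-x) ^ (c-1) * -1) x := by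
    have := (Real.hasDerivAt_rpow_const (p := c) (Or.inl hx1)).comp x
      ((hasDerivAt_id x).const_sub 1)
    simpa [Function.comp_def] using this
  exact (((hasDerivAt_const x (1:ℝ)).sub (h1.const_mul P1)).sub (h2.const_mul P2)).const_mul L

private lemma hasDerivAt_G1 (L c P1 P2 : ℝ) {x : ℝ} (hx0 : x ≠ 0) (hx1 : 1 - x ≠ 0) :
    HasDerivAt (fun y : ℝ => L * (0 - P1 * (c * y ^ (c-1)) - P2 * (c * (1-y) ^ (c-1) * -1)))
      (L * (0 - P1 * (c * ((c-1) * x ^ (c-1-1)))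
        - P2 * (c * ((c-1) * (1-x) ^ (c-1-1) * -1) * -1))) x := by
  have h1 : HasDerivAt (fun y : ℝ => y ^ (c-1)) ((c-1) * x ^ (c-1-1)) x :=
    Real.hasDerivAt_rpow_const (Or.inl hx0)
  have h2 : HasDerivAt (fun y : ℝ => (1-y) ^ (c-1)) ((c-1) * (1-x) ^ (c-1-1) * -1) x := by
    have := (Real.hasDerivAt_rpow_const (p := c-1) (Or.inl hx1)).comp x
      ((hasDerivAt_id x).const_sub 1)
    simpa [Function.comp_def] using this
  exact (((hasDerivAt_const x (0:ℝ)).sub ((h1.const_mul c).const_mul P1)).sub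
    (((h2.const_mul c).mul_const (-1)).const_mul P2)).const_mul L

set_option maxHeartbeats 1000000 in
/-- Second-derivative comparison between `JS_α` and `H_{1−λ}` for Bernoulli pairs. -/
theorem stmt16 (p α q r : ℝ) (hp : p ∈ Set.Icc (0:ℝ) (1/2))
    (hα : α ∈ Set.Ioc (0:ℝ) (1/2)) (hq : q ∈ Set.Ioo (0:ℝ) 1) (hr : 0 < r)
    (hlam : r / Real.log (1/α) ∈ Set.Ioc (0:ℝ) (1/2)) :
    deriv (deriv (fun q : ℝ =>
        α * (p * Real.log (p / (α * p + (1 - α) * q))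
              + (1 - p) * Real.log ((1 - p) / (α * (1 - p) + (1 - α) * (1 - q))))
        + (1 - α) * (q * Real.log (q / (α * p + (1 - α) * q))
              + (1 - q) * Real.log ((1 - q) / (α * (1 - p) + (1 - α) * (1 - q)))))) q
    ≤ (32 * Real.exp (2 * r) * α / r) *
      deriv (deriv (fun q : ℝ => Real.log (1/α) *
        (1 - p ^ (1 - r / Real.log (1/α)) * q ^ (r / Real.log (1/α))
          - (1 - p) ^ (1 - r / Real.log (1/α)) * (1 - q) ^ (r / Real.log (1/α))))) q := by
  obtain ⟨hp0, hp2⟩ := hp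
  obtain ⟨hα0, hα2⟩ := hα
  obtain ⟨hq0, hq1⟩ := hq
  obtain ⟨hc0, hc2⟩ := hlam
  have hp1 : p < 1 := by linarith
  have hα1 : α < 1 := by linarith
  have h1q : 0 < 1 - q := by linarith
  have h1p : 0 < 1 - p := by linarith
  set L : ℝ := Real.log (1/α) with hLdef
  have hL : 0 < L := Real.log_pos (by rw [lt_div_iff₀ hα0]; linarith)
  set c : ℝ := r / L with hcdef
  have hαe : α = Real.exp (-(r/c)) := by
    have h : r / c = L := by rw [hcdef]; field_simp
    rw [h, hLdef, one_div, Real.log_inv, neg_neg, Real.exp_log hα0]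
  have hIoo : Set.Ioo (0:ℝ) 1 ∈ nhds q := isOpen_Ioo.mem_nhds ⟨hq0, hq1⟩
  -- F side
  have hdF : Set.EqOn
      (deriv (fun y : ℝ =>
        α * (p * Real.log (p / (α * p + (1 - α) * y))
              + (1 - p) * Real.log ((1 - p) / (α * (1 - p) + (1 - α) * (1 - y))))
        + (1 - α) * (y * Real.log (y / (α * p + (1 - α) * y))
              + (1 - y) * Real.log ((1 - y) / (α * (1 - p) + (1 - α) * (1 - y))))))
      (fun y : ℝ => (1-α) * (Real.log y - Real.log (α*p+(1-α)*y) - Real.log (1-y)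
          + Real.log (α*(1-p)+(1-α)*(1-y)))) (Set.Ioo 0 1) :=
    fun x hx => (hasDerivAt_F p α hp0 hp1 hα0 hα1 hx.1 hx.2).deriv
  have h1 : deriv (deriv (fun y : ℝ =>
        α * (p * Real.log (p / (α * p + (1 - α) * y))
              + (1 - p) * Real.log ((1 - p) / (α * (1 - p) + (1 - α) * (1 - y))))
        + (1 - α) * (y * Real.log (y / (α * p + (1 - α) * y))
              + (1 - y) * Real.log ((1 - y) / (α * (1 - p) + (1 - α) * (1 - y)))))) q
      = (1-α) * (q⁻¹ - (1-α)/(α*p+(1-α)*q) - (-1)/(1-q)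
          + -(1-α)/(α*(1-p)+(1-α)*(1-q))) := by
    rw [Filter.EventuallyEq.deriv_eq (Filter.eventuallyEq_of_mem hIoo hdF)]
    exact (hasDerivAt_F1 p α hp0 hp1 hα0 hα1 hq0 hq1).deriv
  -- G side
  have hdG : Set.EqOn
      (deriv (fun y : ℝ => L * (1 - p ^ (1-c) * y ^ c - (1-p) ^ (1-c) * (1-y) ^ c)))
      (fun y : ℝ => L * (0 - p ^ (1-c) * (c * y ^ (c-1))
          - (1-p) ^ (1-c) * (c * (1-y) ^ (c-1) * -1))) (Set.Ioo 0 1) :=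
    fun x hx => (hasDerivAt_G L c (p^(1-c)) ((1-p)^(1-c)) hx.1.ne'
      (by have := hx.2; intro hh; simp only [sub_eq_zero] at hh; exact absurd hh.symm (ne_of_lt this))).deriv
  have h2 : deriv (deriv (fun y : ℝ =>
        L * (1 - p ^ (1-c) * y ^ c - (1-p) ^ (1-c) * (1-y) ^ c))) q
      = L * (0 - p^(1-c) * (c * ((c-1) * q ^ (c-1-1)))
          - (1-p)^(1-c) * (c * ((c-1) * (1-q) ^ (c-1-1) * -1) * -1)) := by
    rw [Filter.EventuallyEq.deriv_eq (Filter.eventuallyEq_of_mem hIoo hdG)]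
    exact (hasDerivAt_G1 L c (p^(1-c)) ((1-p)^(1-c)) hq0.ne' h1q.ne').deriv
  rw [h1, h2]
  -- algebraic endgame
  have hMq : 0 < α*p+(1-α)*q := by nlinarith
  have hMcq : 0 < α*(1-p)+(1-α)*(1-q) := by nlinarith
  have hE2 := Real.exp_pos (2*r)
  have ec : c - 1 - 1 = c - 2 := by ring
  rw [ec]
  have hk1 := key_div hα0 hr hc0 hc2 hαe hp0 hq0 hα2
  have hk2 := key_div hα0 hr hc0 hc2 hαe h1p.le h1q hα2
  set S1 : ℝ := p^(1-c) * q^(c-2) with hS1def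
  set S2 : ℝ := (1-p)^(1-c) * (1-q)^(c-2) with hS2def
  set T1 : ℝ := p / (q * (α*p+(1-α)*q)) with hT1def
  set T2 : ℝ := (1-p) / ((1-q) * (α*(1-p)+(1-α)*(1-q))) with hT2def
  have hS1 : 0 ≤ S1 := by rw [hS1def]; positivity
  have hS2 : 0 ≤ S2 := by rw [hS2def]; positivity
  have hT1 : 0 ≤ T1 := div_nonneg hp0 (by positivity)
  have hT2 : 0 ≤ T2 := div_nonneg h1p.le (by positivity)
  have lhs_eq : (1-α) * (q⁻¹ - (1-α)/(α*p+(1-α)*q) - (-1)/(1-q)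
      + -(1-α)/(α*(1-p)+(1-α)*(1-q))) = α*(1-α)*(T1 + T2) := by
    rw [hT1def, hT2def]
    field_simp
    ring
  have hLc : L * c = r := by rw [hcdef]; field_simp
  have rhs_eq : (32 * Real.exp (2*r) * α / r) *
      (L * (0 - p^(1-c) * (c * ((c-1) * q ^ (c-2)))
        - (1-p)^(1-c) * (c * ((c-1) * (1-q) ^ (c-2) * -1) * -1)))
      = 32 * Real.exp (2*r) * α * (1-c) * (S1 + S2) := by
    have e : L * (0 - p^(1-c) * (c * ((c-1) * q ^ (c-2)))
        - (1-p)^(1-c) * (c * ((c-1) * (1-q) ^ (c-2) * -1) * -1))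
        = (L*c) * ((1-c) * (S1 + S2)) := by rw [hS1def, hS2def]; ring
    rw [e, hLc]
    field_simp
  rw [lhs_eq, rhs_eq]
  have step1 : α*(1-α)*(T1+T2) ≤ α*(2*Real.exp (2*r)*(S1+S2)) := by
    have hsum : T1 + T2 ≤ 2*Real.exp (2*r)*(S1+S2) := by
      linarith [hk1, hk2]
    calc α*(1-α)*(T1+T2) ≤ α*(T1+T2) := by
          nlinarith [mul_nonneg (mul_nonneg hα0.le hα0.le) (add_nonneg hT1 hT2)]
      _ ≤ α*(2*Real.exp (2*r)*(S1+S2)) := by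
          exact mul_le_mul_of_nonneg_left hsum hα0.le
  have step2 : α*(2*Real.exp (2*r)*(S1+S2)) ≤ 32*Real.exp (2*r)*α*(1-c)*(S1+S2) := by
    nlinarith [mul_nonneg (mul_nonneg (mul_nonneg hα0.le hE2.le) (add_nonneg hS1 hS2))
      (by linarith : (0:ℝ) ≤ 32*(1-c)-2)]
  linarith
end
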